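/- Let L be an n×n ICB matrix in δ-block echelon form and K a field. Let C and D be two distinct nonempty subsets of {1,…,n−1}; set E = C∩D, F = C∖E, G = D∖E, U = C∪D, V = {1,…,n}∖U; write m_C = x^{C→C̄} (where C̄ = {1,…,n}∖C) for the leading monomial of f_C, and define the S-polynomial S(f_C,f_D) = (LCM(m_D,m_C)/m_C)·f_C − (LCM(m_C,m_D)/m_D)·f_D, and the monomials l_{C,D} = x^{(E→G,F)⁺} x^{F→G} x^{V→D} and l_{D,C} = x^{(E→F,G)⁺} x^{G→F} x^{V→C}. Then: (a) if both F and G are nonempty, S(f_C,f_D) = l_{C,D}·f_F − l_{D,C}·f_G; (b) if C ⊊ D (so F = ∅), S(f_C,f_D) = −l_{D,C}·f_G. -/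
import Mathlib


open MvPolynomial Finset

/-- A critical binomial (CB) matrix. -/
def IsCB (n : ℕ) (L : Matrix (Fin n) (Fin n) ℤ) : Prop :=
  (∀ i, 0 < L i i) ∧ (∀ i j : Fin n, i ≠ j → L i j ≤ 0) ∧ (∀ i, ∑ j, L i j = 0) ∧
    (∀ j, ∃ i, i ≠ j ∧ L i j ≠ 0)

/-- Irreducibility of a square matrix. -/
def IsIrreducibleMat {n : ℕ} (M : Matrix (Fin n) (Fin n) ℤ) : Prop :=
  ¬ ∃ I J : Set (Fin n), I.Nonempty ∧ J.Nonempty ∧ Disjoint I J ∧ I ∪ J = Set.univ ∧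
      ∀ i ∈ I, ∀ j ∈ J, M i j = 0

def IsICB (n : ℕ) (L : Matrix (Fin n) (Fin n) ℤ) : Prop := IsCB n L ∧ IsIrreducibleMat L

/-- `L` is in `δ`-block echelon form: there is a partition of `{1,…,n-1}` into `δ`
consecutive nonempty intervals `I₁,…,I_δ` with `I_{δ+1} = {n}` (encoded by the monotone
surjection `β` sending each index to its block, with only the last vertex in the last
block) such that `L_{I_i,I_j} = 0` whenever `j + 2 ≤ i`, and every column of
`L_{I_{j+1},I_j}` is nonzero. -/
def IsBlockEchelon (n δ : ℕ) (L : Matrix (Fin n) (Fin n) ℤ) : Prop :=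
  ∃ β : Fin n → Fin (δ + 1), Monotone β ∧ Function.Surjective β ∧
    (∀ a : Fin n, β a = Fin.last δ ↔ (a : ℕ) = n - 1) ∧
    (∀ a b : Fin n, (β b : ℕ) + 2 ≤ (β a : ℕ) → L a b = 0) ∧
    (∀ b : Fin n, β b ≠ Fin.last δ →
      ∃ a : Fin n, (β a : ℕ) = (β b : ℕ) + 1 ∧ L a b ≠ 0)

/-- The monomial `x^{S → T} = ∏_{i ∈ S} xᵢ^{Σ_{j ∈ T} a i j}`, where `a i j = -L i j`. -/
noncomputable def xArrow (K : Type*) [Field K] {n : ℕ} (L : Matrix (Fin n) (Fin n) ℤ)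
    (S T : Finset (Fin n)) : MvPolynomial (Fin n) K :=
  ∏ i ∈ S, X i ^ (∑ j ∈ T, (-L i j).toNat)

/-- The monomial `x^{(A → B, C')⁺} = ∏_{i ∈ A} xᵢ^{(Σ_{j ∈ B} a i j - Σ_{j ∈ C'} a i j)⁺}`
(the exponents use truncated subtraction). -/
noncomputable def xPlusArrow (K : Type*) [Field K] {n : ℕ} (L : Matrix (Fin n) (Fin n) ℤ)
    (A B C' : Finset (Fin n)) : MvPolynomial (Fin n) K :=
  ∏ i ∈ A, X i ^ ((∑ j ∈ B, (-L i j).toNat) - (∑ j ∈ C', (-L i j).toNat))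

/-- The exponent vector of the monomial `x^{S → T}`. -/
def expArrow {n : ℕ} (L : Matrix (Fin n) (Fin n) ℤ) (S T : Finset (Fin n)) :
    Fin n → ℕ :=
  fun i => if i ∈ S then ∑ j ∈ T, (-L i j).toNat else 0

/-- The binomial `f_C = x^{C→C̄} - x^{C̄→C}`. -/
noncomputable def fBin (K : Type*) [Field K] {n : ℕ} (L : Matrix (Fin n) (Fin n) ℤ)
    (C : Finset (Fin n)) : MvPolynomial (Fin n) K :=
  xArrow K L C Cᶜ - xArrow K L Cᶜ C

/-- The S-polynomial of `f_C` and `f_D`: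
`S(f_C,f_D) = (LCM(m_D,m_C)/m_C)·f_C - (LCM(m_C,m_D)/m_D)·f_D`, where
`m_C = x^{C→C̄}` is the leading monomial of `f_C`. -/
noncomputable def sPoly (K : Type*) [Field K] {n : ℕ} (L : Matrix (Fin n) (Fin n) ℤ)
    (C D : Finset (Fin n)) : MvPolynomial (Fin n) K :=
  (∏ i : Fin n, X i ^ (max (expArrow L D Dᶜ i) (expArrow L C Cᶜ i) - expArrow L C Cᶜ i)) *
      fBin K L C -
    (∏ i : Fin n, X i ^ (max (expArrow L C Cᶜ i) (expArrow L D Dᶜ i) - expArrow L D Dᶜ i)) *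
      fBin K L D

/-- The monomial `l_{C,D} = x^{(E→G,F)⁺} x^{F→G} x^{V→D}` where `E = C ∩ D`,
`F = C ∖ E`, `G = D ∖ E`, `V = (C ∪ D)ᶜ`. -/
noncomputable def lMono (K : Type*) [Field K] {n : ℕ} (L : Matrix (Fin n) (Fin n) ℤ)
    (C D : Finset (Fin n)) : MvPolynomial (Fin n) K :=
  xPlusArrow K L (C ∩ D) (D \ C) (C \ D) * xArrow K L (C \ D) (D \ C) *
    xArrow K L (C ∪ D)ᶜ D

private lemma prod_pow_extend {K : Type*} [Field K] {n : ℕ} (S : Finset (Fin n)) (f : Fin n → ℕ) :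
    (∏ i ∈ S, (X i : MvPolynomial (Fin n) K) ^ f i)
      = ∏ i : Fin n, X i ^ (if i ∈ S then f i else 0) := by
  have h1 : (∏ i ∈ S, (X i : MvPolynomial (Fin n) K) ^ f i)
      = ∏ i ∈ S, X i ^ (if i ∈ S then f i else 0) :=
    Finset.prod_congr rfl fun i hi => by rw [if_pos hi]
  rw [h1]
  exact Finset.prod_subset (Finset.subset_univ S) fun i _ hi => by
    rw [if_neg hi, pow_zero]

private lemma prod_pow_mul {K : Type*} [Field K] {n : ℕ} (f g : Fin n → ℕ) :
    (∏ i : Fin n, (X i : MvPolynomial (Fin n) K) ^ f i) * ∏ i : Fin n, X i ^ g i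
      = ∏ i : Fin n, X i ^ (f i + g i) := by
  rw [← Finset.prod_mul_distrib]
  exact Finset.prod_congr rfl fun i _ => (pow_add _ _ _).symm

private lemma sum_split_eq {n : ℕ} {S T U : Finset (Fin n)}
    (hS : ∀ x, x ∈ S ↔ x ∈ T ∨ x ∈ U) (hd : ∀ x, x ∈ T → x ∉ U) (f : Fin n → ℕ) :
    ∑ j ∈ S, f j = ∑ j ∈ T, f j + ∑ j ∈ U, f j := by
  rw [show S = T ∪ U from Finset.ext fun x => by simpa using hS x,
    Finset.sum_union (Finset.disjoint_left.2 hd)]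

private lemma aux0 (K : Type*) [Field K] {n : ℕ} (L : Matrix (Fin n) (Fin n) ℤ)
    (C D : Finset (Fin n)) :
    (∏ i : Fin n, (X i : MvPolynomial (Fin n) K) ^
        (max (expArrow L D Dᶜ i) (expArrow L C Cᶜ i) - expArrow L C Cᶜ i)) *
        xArrow K L C Cᶜ
      = (∏ i : Fin n, X i ^
          (max (expArrow L C Cᶜ i) (expArrow L D Dᶜ i) - expArrow L D Dᶜ i)) *
          xArrow K L D Dᶜ := by
  simp only [xArrow]
  rw [prod_pow_extend C, prod_pow_extend D, prod_pow_mul, prod_pow_mul]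
  refine Finset.prod_congr rfl fun i _ => congrArg (HPow.hPow (X i)) ?_
  by_cases hiC : i ∈ C <;> by_cases hiD : i ∈ D <;>
    simp [expArrow, hiC, hiD] <;> omega


private lemma aux1 (K : Type*) [Field K] {n : ℕ} (L : Matrix (Fin n) (Fin n) ℤ)
    (C D : Finset (Fin n)) :
    lMono K L C D * xArrow K L (C \ D) (C \ D)ᶜ
      = (∏ i : Fin n, (X i : MvPolynomial (Fin n) K) ^
          (max (expArrow L C Cᶜ i) (expArrow L D Dᶜ i) - expArrow L D Dᶜ i)) *
          xArrow K L Dᶜ D := by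
  simp only [lMono, xArrow, xPlusArrow]
  rw [prod_pow_extend (C ∩ D), prod_pow_extend (C \ D), prod_pow_extend (C ∪ D)ᶜ,
    prod_pow_extend (C \ D), prod_pow_extend Dᶜ,
    prod_pow_mul, prod_pow_mul, prod_pow_mul, prod_pow_mul]
  refine Finset.prod_congr rfl fun i _ => congrArg (HPow.hPow (X i)) ?_
  have h1 : ∑ j ∈ Cᶜ, (-L i j).toNat
      = ∑ j ∈ D \ C, (-L i j).toNat + ∑ j ∈ (C ∪ D)ᶜ, (-L i j).toNat :=
    sum_split_eq (fun x => by simp; tauto) (fun x hx => by simp at hx ⊢; tauto) _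
  have h2 : ∑ j ∈ Dᶜ, (-L i j).toNat
      = ∑ j ∈ C \ D, (-L i j).toNat + ∑ j ∈ (C ∪ D)ᶜ, (-L i j).toNat :=
    sum_split_eq (fun x => by simp; tauto) (fun x hx => by simp at hx ⊢; tauto) _
  have h3 : ∑ j ∈ C, (-L i j).toNat
      = ∑ j ∈ C ∩ D, (-L i j).toNat + ∑ j ∈ C \ D, (-L i j).toNat :=
    sum_split_eq (fun x => by simp; tauto) (fun x hx => by simp at hx ⊢; tauto) _
  have h4 : ∑ j ∈ D, (-L i j).toNat
      = ∑ j ∈ C ∩ D, (-L i j).toNat + ∑ j ∈ D \ C, (-L i j).toNat :=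
    sum_split_eq (fun x => by simp; tauto) (fun x hx => by simp at hx ⊢; tauto) _
  have h5 : ∑ j ∈ (C \ D)ᶜ, (-L i j).toNat
      = ∑ j ∈ D, (-L i j).toNat + ∑ j ∈ (C ∪ D)ᶜ, (-L i j).toNat :=
    sum_split_eq (fun x => by simp; tauto) (fun x hx => by simp at hx ⊢; tauto) _
  have h6 : ∑ j ∈ (D \ C)ᶜ, (-L i j).toNat
      = ∑ j ∈ C, (-L i j).toNat + ∑ j ∈ (C ∪ D)ᶜ, (-L i j).toNat :=
    sum_split_eq (fun x => by simp; tauto) (fun x hx => by simp at hx ⊢; tauto) _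
  by_cases hiC : i ∈ C <;> by_cases hiD : i ∈ D <;>
    simp [expArrow, hiC, hiD] <;> omega

private lemma aux3 (K : Type*) [Field K] {n : ℕ} (L : Matrix (Fin n) (Fin n) ℤ)
    (C D : Finset (Fin n)) :
    lMono K L C D * xArrow K L (C \ D)ᶜ (C \ D)
      = lMono K L D C * xArrow K L (D \ C)ᶜ (D \ C) := by
  simp only [lMono, xArrow, xPlusArrow]
  rw [prod_pow_extend (C ∩ D), prod_pow_extend (C \ D), prod_pow_extend (C ∪ D)ᶜ,
    prod_pow_extend (C \ D)ᶜ, prod_pow_extend (D ∩ C), prod_pow_extend (D \ C),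
    prod_pow_extend (D ∪ C)ᶜ, prod_pow_extend (D \ C)ᶜ,
    prod_pow_mul, prod_pow_mul, prod_pow_mul, prod_pow_mul, prod_pow_mul, prod_pow_mul]
  refine Finset.prod_congr rfl fun i _ => congrArg (HPow.hPow (X i)) ?_
  have h3 : ∑ j ∈ C, (-L i j).toNat
      = ∑ j ∈ C ∩ D, (-L i j).toNat + ∑ j ∈ C \ D, (-L i j).toNat :=
    sum_split_eq (fun x => by simp; tauto) (fun x hx => by simp at hx ⊢; tauto) _
  have h4 : ∑ j ∈ D, (-L i j).toNat
      = ∑ j ∈ C ∩ D, (-L i j).toNat + ∑ j ∈ D \ C, (-L i j).toNat :=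
    sum_split_eq (fun x => by simp; tauto) (fun x hx => by simp at hx ⊢; tauto) _
  by_cases hiC : i ∈ C <;> by_cases hiD : i ∈ D <;>
    simp [hiC, hiD] <;> omega

private lemma sPoly_core (K : Type*) [Field K] {n : ℕ} (L : Matrix (Fin n) (Fin n) ℤ)
    (C D : Finset (Fin n)) :
    sPoly K L C D =
      lMono K L C D * fBin K L (C \ D) - lMono K L D C * fBin K L (D \ C) := by
  simp only [sPoly, fBin]
  linear_combination aux0 K L C D - aux1 K L C D + aux1 K L D C + aux3 K L C D

private lemma fBin_empty (K : Type*) [Field K] {n : ℕ} (L : Matrix (Fin n) (Fin n) ℤ) :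
    fBin K L (∅ : Finset (Fin n)) = 0 := by
  simp [fBin, xArrow]

/-- Let `L` be an ICB matrix in `δ`-block echelon form, `K` a field, and
`C ≠ D` nonempty subsets of `{1,…,n-1}`, with `F = C ∖ D`, `G = D ∖ C`.  Then:
(a) if `F` and `G` are both nonempty, `S(f_C,f_D) = l_{C,D}·f_F - l_{D,C}·f_G`;
(b) if `C ⊊ D` (so `F = ∅`), `S(f_C,f_D) = -l_{D,C}·f_G`. -/
theorem sPoly_eq (n : ℕ) (hn : 3 ≤ n)
    (L : Matrix (Fin n) (Fin n) ℤ) (hL : IsICB n L)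
    (δ : ℕ) (hech : IsBlockEchelon n δ L)
    (K : Type*) [Field K]
    (C D : Finset (Fin n)) (hC : C.Nonempty) (hD : D.Nonempty)
    (hCl : (⟨n - 1, by omega⟩ : Fin n) ∉ C) (hDl : (⟨n - 1, by omega⟩ : Fin n) ∉ D)
    (hCD : C ≠ D) :
    ((C \ D).Nonempty → (D \ C).Nonempty →
      sPoly K L C D =
        lMono K L C D * fBin K L (C \ D) - lMono K L D C * fBin K L (D \ C)) ∧
    (C ⊂ D → sPoly K L C D = -(lMono K L D C * fBin K L (D \ C))) := by
  constructor
  · intro _ _; exact sPoly_core K L C D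
  · intro hsub
    rw [sPoly_core K L C D, Finset.sdiff_eq_empty_iff_subset.2 hsub.subset, fBin_empty,
      mul_zero, zero_sub]
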